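/- Let l₁, l₂ be positive reals with λ₁ < μ₁l₁ and λ₂ < μ₂l₂. Then there exists no invariant distribution of the random walk (m̄_l(t)), i.e., no probability distribution π on ℕ×ℕ satisfies the balance equations. -/

import Mathlib

/-!
Cut the quadrant between columns `n` and `n + 1`. Summing the balance equations over the columns
`≤ n` (the vertical flows telescope away) shows that the net flow across every such cut vanishes:
`μ₁l₁ A(n) = λ₁ A(n+1) + p₂λ₂ π(n+1, 0)` for the column masses `A`. Summing over `n` gives
`μ₁l₁ = λ₁ (1 - A(0)) + p₂λ₂ (B(0) - π(0,0)) ≤ λ₁ (1 - A(0)) + λ₂ B(0)`, with `B(0)` the mass of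
the bottom row, and symmetrically `μ₂l₂ ≤ λ₂ (1 - B(0)) + λ₁ A(0)`. Adding, `μ₁l₁ + μ₂l₂ ≤ λ₁ + λ₂`,
contradicting the instability assumptions.
-/

/-- π is an invariant (stationary) probability distribution of the random walk (m̄_l(t)):
nonnegative, sums to 1, and satisfies the balance equations. -/
def IsInvariantDist (la1 la2 mu1 mu2 l1 l2 p1 p2 : ℝ) (π : ℕ × ℕ → ℝ) : Prop :=
  (∀ m, 0 ≤ π m) ∧ (∑' m : ℕ × ℕ, π m = 1) ∧
  ∀ m1 m2 : ℕ,
    π (m1, m2) * (mu1 * l1 + mu2 * l2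
        + (la1 + p2 * la2 * (if m2 = 0 then 1 else 0)) * (if 0 < m1 then 1 else 0)
        + (la2 + p1 * la1 * (if m1 = 0 then 1 else 0)) * (if 0 < m2 then 1 else 0))
    = mu1 * l1 * π (m1 - 1, m2) * (if 0 < m1 then 1 else 0)
      + mu2 * l2 * π (m1, m2 - 1) * (if 0 < m2 then 1 else 0)
      + (la1 + p2 * la2 * (if m2 = 0 then 1 else 0)) * π (m1 + 1, m2)
      + (la2 + p1 * la1 * (if m1 = 0 then 1 else 0)) * π (m1, m2 + 1)

section Flux

variable {G : Type*} [AddCommGroup G] [TopologicalSpace G] [IsTopologicalAddGroup G]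

theorem HasSum.ite_pos_pred {f : ℕ → G} {a : G} (hf : HasSum f a) :
    HasSum (fun n => if 0 < n then f (n - 1) else 0) a := by
  simpa using (hasSum_nat_add_iff (f := fun n => if 0 < n then f (n - 1) else 0) 1).mp hf

theorem cutFlux_eq_zero [T2Space G] {H V : ℕ → ℕ → G} {C : ℕ → G}
    (hH : ∀ m1, HasSum (H m1) (C m1)) (hV : ∀ m1, Summable (V m1))
    (hdiv : ∀ m1 m2, H m1 m2 - (if 0 < m1 then H (m1 - 1) m2 else 0)
        + (V m1 m2 - (if 0 < m2 then V m1 (m2 - 1) else 0)) = 0)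
    (n : ℕ) : C n = 0 := by
  have hrec : ∀ m1, C m1 - (if 0 < m1 then C (m1 - 1) else 0) = 0 := by
    intro m1
    have hprev : HasSum (fun m2 => if 0 < m1 then H (m1 - 1) m2 else 0)
        (if 0 < m1 then C (m1 - 1) else 0) := by
      split_ifs
      exacts [hH _, hasSum_zero]
    obtain ⟨v, hv⟩ := hV m1
    have hdivSum : HasSum (fun _ : ℕ => (0 : G))
        (C m1 - (if 0 < m1 then C (m1 - 1) else 0) + (v - v)) := by
      convert ((hH m1).sub hprev).add (hv.sub hv.ite_pos_pred) using 1
      exact funext fun m2 => (hdiv m1 m2).symm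
    simpa using hdivSum.unique hasSum_zero
  induction n with
  | zero => simpa using hrec 0
  | succ n ih => simpa [ih] using hrec (n + 1)

end Flux

namespace IsInvariantDist

variable {la1 la2 mu1 mu2 l1 l2 p1 p2 : ℝ} {π : ℕ × ℕ → ℝ}

theorem swap (h : IsInvariantDist la1 la2 mu1 mu2 l1 l2 p1 p2 π) :
    IsInvariantDist la2 la1 mu2 mu1 l2 l1 p2 p1 (fun m => π m.swap) := by
  obtain ⟨hpos, hsum, hbal⟩ := h
  refine ⟨fun m => hpos _, ?_, fun m1 m2 => ?_⟩
  · rw [← hsum]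
    exact (Equiv.prodComm ℕ ℕ).tsum_eq π
  · simp only [Prod.swap_prod_mk]
    linear_combination hbal m2 m1

theorem summable (h : IsInvariantDist la1 la2 mu1 mu2 l1 l2 p1 p2 π) : Summable π := by
  by_contra hs
  have := h.2.1
  rw [tsum_eq_zero_of_not_summable hs] at this
  exact zero_ne_one this

theorem cut_balance (h : IsInvariantDist la1 la2 mu1 mu2 l1 l2 p1 p2 π) (n : ℕ) :
    mu1 * l1 * ∑' m2, π (n, m2) = la1 * ∑' m2, π (n + 1, m2) + p2 * la2 * π (n + 1, 0) := by
  have hrow : ∀ m1, HasSum (fun m2 => π (m1, m2)) (∑' m2, π (m1, m2)) :=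
    fun m1 => (h.summable.prod_factor m1).hasSum
  -- Net flows from column `m1 + 1` to `m1` in row `m2` and from row `m2 + 1` to `m2` in column `m1`;
  -- the balance equation at `(m1, m2)` says that their divergence vanishes.
  have hH : ∀ m1, HasSum
      (fun m2 => la1 * π (m1 + 1, m2) + (if m2 = 0 then p2 * la2 * π (m1 + 1, 0) else 0)
        - mu1 * l1 * π (m1, m2))
      (la1 * ∑' m2, π (m1 + 1, m2) + p2 * la2 * π (m1 + 1, 0) - mu1 * l1 * ∑' m2, π (m1, m2)) :=
    fun m1 => (((hrow _).mul_left la1).add (hasSum_ite_eq 0 _)).sub ((hrow m1).mul_left _)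
  have hV : ∀ m1, Summable fun m2 =>
      (la2 + p1 * la1 * (if m1 = 0 then 1 else 0)) * π (m1, m2 + 1) - mu2 * l2 * π (m1, m2) :=
    fun m1 => (((summable_nat_add_iff 1).mpr (hrow m1).summable).mul_left _).sub
      ((hrow m1).summable.mul_left _)
  have hcut := cutFlux_eq_zero hH hV (fun m1 m2 => by
    have hbal := h.2.2 m1 m2
    rcases m1 with _ | m1 <;> rcases m2 with _ | m2 <;> simp at hbal ⊢ <;> linear_combination -hbal) n
  linear_combination -hcut

theorem flux_identity (h : IsInvariantDist la1 la2 mu1 mu2 l1 l2 p1 p2 π) :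
    mu1 * l1 = la1 * (1 - ∑' m2, π (0, m2)) + p2 * la2 * (∑' m1, π (m1, 0) - π (0, 0)) := by
  have hA : HasSum (fun n => ∑' m2, π (n, m2)) 1 :=
    (h.2.1 ▸ h.summable.hasSum).prod_fiberwise fun m1 => (h.summable.prod_factor m1).hasSum
  have hB : HasSum (fun m1 => π (m1, 0)) (∑' m1, π (m1, 0)) :=
    (h.summable.comp_injective (Prod.mk_left_injective 0)).hasSum
  have hA' := (hasSum_nat_add_iff' 1).mpr hA
  have hB' := (hasSum_nat_add_iff' 1).mpr hB
  rw [Finset.sum_range_one] at hA' hB'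
  have hcuts := (hA'.mul_left la1).add (hB'.mul_left (p2 * la2))
  simp only [← h.cut_balance] at hcuts
  simpa using (hA.mul_left (mu1 * l1)).unique hcuts

theorem flux_le (h : IsInvariantDist la1 la2 mu1 mu2 l1 l2 p1 p2 π)
    (hla2 : 0 ≤ la2) (hp2 : 0 ≤ p2) (hp2' : p2 ≤ 1) :
    mu1 * l1 ≤ la1 * (1 - ∑' m2, π (0, m2)) + la2 * ∑' m1, π (m1, 0) := by
  have hπ : 0 ≤ π (0, 0) := h.1 _
  have hB : 0 ≤ ∑' m1, π (m1, 0) := tsum_nonneg fun _ => h.1 _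
  have hboundary : p2 * la2 * (∑' m1, π (m1, 0) - π (0, 0)) ≤ la2 * ∑' m1, π (m1, 0) :=
    calc p2 * la2 * (∑' m1, π (m1, 0) - π (0, 0))
        = p2 * la2 * ∑' m1, π (m1, 0) - p2 * la2 * π (0, 0) := by ring
      _ ≤ p2 * la2 * ∑' m1, π (m1, 0) := sub_le_self _ (by positivity)
      _ ≤ la2 * ∑' m1, π (m1, 0) :=
        mul_le_mul_of_nonneg_right (mul_le_of_le_one_left hla2 hp2') hB
  linarith [h.flux_identity]

end IsInvariantDist

theorem stmt19_general (la1 la2 mu1 mu2 p1 p2 l1 l2 : ℝ)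
    (hla1 : 0 < la1) (hla2 : 0 < la2)
    (hp1 : 0 ≤ p1) (hp1' : p1 ≤ 1) (hp2 : 0 ≤ p2) (hp2' : p2 ≤ 1)
    (h1 : la1 < mu1 * l1) (h2 : la2 < mu2 * l2) :
    ¬ ∃ π : ℕ × ℕ → ℝ, IsInvariantDist la1 la2 mu1 mu2 l1 l2 p1 p2 π := by
  rintro ⟨π, hπ⟩
  have hflux₁ := hπ.flux_le hla2.le hp2 hp2'
  have hflux₂ := hπ.swap.flux_le hla1.le hp1 hp1'
  simp only [Prod.swap_prod_mk] at hflux₂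
  linarith

theorem stmt19 (la1 la2 mu1 mu2 p1 p2 l1 l2 : ℝ)
    (hla1 : 0 < la1) (hla2 : 0 < la2) (hmu1 : 0 < mu1) (hmu2 : 0 < mu2)
    (hp1 : 0 ≤ p1) (hp1' : p1 ≤ 1) (hp2 : 0 ≤ p2) (hp2' : p2 ≤ 1)
    (hl1 : 0 < l1) (hl2 : 0 < l2)
    (h1 : la1 < mu1 * l1) (h2 : la2 < mu2 * l2) :
    ¬ ∃ π : ℕ × ℕ → ℝ, IsInvariantDist la1 la2 mu1 mu2 l1 l2 p1 p2 π :=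
  stmt19_general la1 la2 mu1 mu2 p1 p2 l1 l2 hla1 hla2 hp1 hp1' hp2 hp2' h1 h2
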